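/- If M is a Neg(A)-minimal model of the renamed knowledge base K* together with the unit clause Neg(D), then A \ Del(M) is a minimal instance deletion of D from A, where Del(M) = { A₀ ∈ A | Neg(A₀) ∈ M }. That is: (1) T ∪ (A \ Del(M)) ⊭ D, and (2) for every Del' ⊊ Del(M), T ∪ (A \ Del') ⊨ D. -/
import Mathlib


/-- A clause `H ← B`: head and body are finite sets of ground atoms. -/
structure Clause (α : Type) where
  head : Finset α
  body : Finset α
deriving DecidableEq

/-- An interpretation (a set of ground atoms) satisfies the clause `H ← B`. -/
def satClause {α : Type} (I : Set α) (C : Clause α) : Prop :=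
  (∀ b ∈ C.body, b ∈ I) → ∃ h ∈ C.head, h ∈ I

/-- An interpretation satisfies a set of clauses. -/
def satSet {α : Type} (I : Set α) (N : Set (Clause α)) : Prop :=
  ∀ C ∈ N, satClause I C

/-- `T ∪ A ⊨ D`: every model of `T` containing all atoms of `A` satisfies `D`. -/
def entails {α : Type} (T : Set (Clause α)) (A : Set α) (D : α) : Prop :=
  ∀ I : Set α, satSet I T → A ⊆ I → D ∈ I

/-- `T ∪ A` is consistent: some model of `T` contains all atoms of `A`. -/
def consistentWith {α : Type} (T : Set (Clause α)) (A : Set α) : Prop :=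
  ∃ I : Set α, satSet I T ∧ A ⊆ I

variable {V : Type} [DecidableEq V]

/-- Extended signature: original atoms, fresh `Neg`-atoms and fresh
`ABox`-atoms. -/
abbrev Atom (V : Type) : Type := V ⊕ (V ⊕ V)

/-- An original atom. -/
def orig (v : V) : Atom V := Sum.inl v

/-- The fresh atom `Neg(v)`. -/
def neg (v : V) : Atom V := Sum.inr (Sum.inl v)

/-- The fresh atom `ABox(v)`. -/
def abox (v : V) : Atom V := Sum.inr (Sum.inr v)

/-- A clause over `V` viewed over the extended signature. -/
def embedClause (C : Clause V) : Clause (Atom V) :=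
  ⟨C.head.image orig, C.body.image orig⟩

/-- The renamed clause `((H \ S) ∪ Neg(B ∩ S)) ← ((B \ S) ∪ Neg(H ∩ S))`. -/
def renameClause (S : Finset V) (C : Clause V) : Clause (Atom V) :=
  ⟨((C.head \ S).image orig) ∪ ((C.body ∩ S).image neg),
   ((C.body \ S).image orig) ∪ ((C.head ∩ S).image neg)⟩

/-- The exclusion clause `⊥ ← p ∧ Neg(p)`. -/
def exclClause (p : V) : Clause (Atom V) :=
  ⟨∅, {orig p, neg p}⟩

/-- A unit fact `a ← ⊤`. -/
def fact (a : Atom V) : Clause (Atom V) := ⟨{a}, ∅⟩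

/-- `K* = R_S(T) ∪ {ABox(a) | a ∈ A}`, where `S` is the set of atoms of the
ABox `A`: each original clause, its renamed version, the exclusion clauses for
`p ∈ S`, and the fresh `ABox` facts. -/
def Kstar (T : Set (Clause V)) (A : Finset V) : Set (Clause (Atom V)) :=
  (embedClause '' T) ∪ (renameClause A '' T) ∪
    {C | ∃ p ∈ A, C = exclClause p} ∪ {C | ∃ a ∈ A, C = fact (abox a)}

/-- `Del(M) = { a ∈ A | Neg(a) ∈ M }`. -/
def Del (A : Finset V) (M : Set (Atom V)) : Set V :=
  {a : V | a ∈ A ∧ neg a ∈ M}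

/-- if `M` is a `Neg(A)`-minimal model of `K* ∪ {Neg(D)}`, then
`A \ Del(M)` is a minimal instance deletion of `D` from `A`:
(1) `T ∪ (A \ Del(M)) ⊭ D`, and (2) for every `Del' ⊊ Del(M)`,
`T ∪ (A \ Del') ⊨ D`. -/
theorem negA_minimal_model_gives_minimal_deletion
    (T : Set (Clause V)) (A : Finset V) (D : V) (hD : D ∈ A)
    (M : Set (Atom V))
    (hM : satSet M (Kstar T A ∪ {fact (neg D)}))
    (hmin : ¬ ∃ M' : Set (Atom V), satSet M' (Kstar T A ∪ {fact (neg D)}) ∧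
        M' ∩ (neg '' (↑A : Set V)) ⊂ M ∩ (neg '' (↑A : Set V))) :
    (¬ entails T ((↑A : Set V) \ Del A M) D) ∧
    (∀ Del' : Set V, Del' ⊂ Del A M → entails T ((↑A : Set V) \ Del') D) := by
  -- basic consequences of hM
  have hnegD : neg D ∈ M := by
    have := hM (fact (neg D)) (Or.inr rfl)
    simpa [fact, satClause] using this
  have hexcl : ∀ p ∈ A, ¬(orig p ∈ M ∧ neg p ∈ M) := by
    intro p hp ⟨h1, h2⟩
    have hmem : exclClause p ∈ Kstar T A ∪ {fact (neg D)} :=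
      Or.inl (Or.inl (Or.inr ⟨p, hp, rfl⟩))
    have := hM _ hmem
    simp only [satClause, exclClause] at this
    obtain ⟨h, hh, _⟩ := this (by intro b hb; simp at hb; rcases hb with rfl | rfl <;> assumption)
    simp at hh
  have hemb : ∀ C ∈ T, satClause M (embedClause C) := by
    intro C hC
    exact hM _ (Or.inl (Or.inl (Or.inl (Or.inl ⟨C, hC, rfl⟩))))
  have hren : ∀ C ∈ T, satClause M (renameClause A C) := by
    intro C hC
    exact hM _ (Or.inl (Or.inl (Or.inl (Or.inr ⟨C, hC, rfl⟩))))
  constructor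
  · -- Part 1
    intro hent
    set I : Set V := {v | orig v ∈ M ∨ (v ∈ A ∧ neg v ∉ M)} with hIdef
    have hsat : satSet I T := by
      intro C hC hb
      by_contra hno
      push_neg at hno
      have hrb : ∀ b ∈ (renameClause A C).body, b ∈ M := by
        intro b hb'
        simp only [renameClause, Finset.mem_union, Finset.mem_image, Finset.mem_sdiff,
          Finset.mem_inter] at hb'
        rcases hb' with ⟨v, ⟨hvB, hvA⟩, rfl⟩ | ⟨v, ⟨hvH, hvA⟩, rfl⟩
        · rcases hb v hvB with h | ⟨hA, _⟩
          · exact h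
          · exact absurd hA hvA
        · have hvI := hno v hvH
          simp only [hIdef, Set.mem_setOf_eq, not_or, not_and, not_not] at hvI
          exact hvI.2 hvA
      obtain ⟨h, hh, hhM⟩ := hren C hC hrb
      simp only [renameClause, Finset.mem_union, Finset.mem_image, Finset.mem_sdiff,
        Finset.mem_inter] at hh
      rcases hh with ⟨v, ⟨hvH, _⟩, rfl⟩ | ⟨v, ⟨hvB, hvA⟩, rfl⟩
      · exact hno v hvH (Or.inl hhM)
      · rcases hb v hvB with h | ⟨_, hn⟩
        · exact hexcl v hvA ⟨h, hhM⟩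
        · exact hn hhM
    have hsub : ((↑A : Set V) \ Del A M) ⊆ I := by
      intro v hv
      right
      refine ⟨hv.1, fun hn => hv.2 ⟨hv.1, hn⟩⟩
    have hDI : D ∈ I := hent I hsat hsub
    rcases hDI with h | ⟨_, hn⟩
    · exact hexcl D hD ⟨h, hnegD⟩
    · exact hn hnegD
  · -- Part 2
    intro Del' hss
    by_contra hne
    unfold entails at hne
    push_neg at hne
    obtain ⟨J, hJT, hJsub, hDJ⟩ := hne
    set M' : Set (Atom V) :=
      Sum.elim (· ∈ J) (Sum.elim (fun v => v ∈ A ∧ v ∉ J) (fun v => v ∈ A)) with hM'def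
    have horigM' : ∀ v : V, orig v ∈ M' ↔ v ∈ J := fun v => Iff.rfl
    have hnegM' : ∀ v : V, neg v ∈ M' ↔ (v ∈ A ∧ v ∉ J) := fun v => Iff.rfl
    have hJA : ∀ v ∈ A, v ∉ Del' → v ∈ J := fun v hv hnd => hJsub ⟨hv, hnd⟩
    have hM' : satSet M' (Kstar T A ∪ {fact (neg D)}) := by
      intro C hC
      rcases hC with (((hC | hC) | hC) | hC) | hC
      · -- embedded clause
        obtain ⟨C₀, hC₀, rfl⟩ := hC
        intro hb
        have hBJ : ∀ b ∈ C₀.body, b ∈ J := by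
          intro b hbB
          exact hb (orig b) (by simp [embedClause, Finset.mem_image]; exact ⟨b, hbB, rfl⟩)
        obtain ⟨h, hh, hhJ⟩ := hJT C₀ hC₀ hBJ
        exact ⟨orig h, by simp [embedClause, Finset.mem_image]; exact ⟨h, hh, rfl⟩, hhJ⟩
      · -- renamed clause
        obtain ⟨C₀, hC₀, rfl⟩ := hC
        intro hb
        by_cases hcase : ∃ b ∈ C₀.body, b ∈ A ∧ b ∉ J
        · obtain ⟨b, hbB, hbA, hbJ⟩ := hcase
          refine ⟨neg b, ?_, ⟨hbA, hbJ⟩⟩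
          simp only [renameClause, Finset.mem_union, Finset.mem_image, Finset.mem_inter]
          exact Or.inr ⟨b, ⟨hbB, hbA⟩, rfl⟩
        · push_neg at hcase
          have hBJ : ∀ b ∈ C₀.body, b ∈ J := by
            intro b hbB
            by_cases hbA : b ∈ A
            · exact hcase b hbB hbA
            · exact hb (orig b) (by
                simp only [renameClause, Finset.mem_union, Finset.mem_image, Finset.mem_sdiff]
                exact Or.inl ⟨b, ⟨hbB, hbA⟩, rfl⟩)
          obtain ⟨h, hh, hhJ⟩ := hJT C₀ hC₀ hBJ
          have hhA : h ∉ A := by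
            intro hhA
            have : neg h ∈ M' := hb (neg h) (by
              simp only [renameClause, Finset.mem_union, Finset.mem_image, Finset.mem_inter]
              exact Or.inr ⟨h, ⟨hh, hhA⟩, rfl⟩)
            exact this.2 hhJ
          refine ⟨orig h, ?_, hhJ⟩
          simp only [renameClause, Finset.mem_union, Finset.mem_image, Finset.mem_sdiff]
          exact Or.inl ⟨h, ⟨hh, hhA⟩, rfl⟩
      · -- exclusion clause
        obtain ⟨p, hp, rfl⟩ := hC
        intro hb
        exfalso
        have h1 : orig p ∈ M' := hb (orig p) (by simp [exclClause])
        have h2 : neg p ∈ M' := hb (neg p) (by simp [exclClause])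
        exact h2.2 h1
      · -- abox facts
        obtain ⟨a, ha, rfl⟩ := hC
        intro _
        exact ⟨abox a, by simp [fact], ha⟩
      · -- fact (neg D)
        rcases hC with rfl
        intro _
        refine ⟨neg D, by simp [fact], ⟨hD, ?_⟩⟩
        intro hDJ'
        exact hDJ hDJ'
    apply hmin
    refine ⟨M', hM', ?_, ?_⟩
    · -- M' ∩ neg '' A ⊆ M ∩ neg '' A
      rintro x ⟨hxM', a, haA, rfl⟩
      refine ⟨?_, ⟨a, haA, rfl⟩⟩
      have haJ : a ∉ J := ((hnegM' a).mp hxM').2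
      have haD' : a ∈ Del' := by
        by_contra hnd
        exact haJ (hJA a haA hnd)
      exact (hss.subset haD').2
    · -- not M ∩ neg '' A ⊆ M' ∩ neg '' A
      intro hsup
      obtain ⟨a₀, ha₀D, ha₀D'⟩ := Set.exists_of_ssubset hss
      have ha₀A : a₀ ∈ A := ha₀D.1
      have ha₀M : neg a₀ ∈ M := ha₀D.2
      have : neg a₀ ∈ M' ∩ (neg '' (↑A : Set V)) :=
        hsup ⟨ha₀M, ⟨a₀, ha₀A, rfl⟩⟩
      exact ((hnegM' a₀).mp this.1).2 (hJA a₀ ha₀A ha₀D')
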